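/- Equivalence of ensembles for local functions. Let f: {0,1}^ℤ → ℝ be a local function with support contained in {1,…,m}. Then lim_{ℓ→∞} max_{0 ≤ k ≤ ℓ} | ∫ f dν_{k,ℓ} − f̄(k/ℓ) | = 0, where for ℓ ≥ m the function f is regarded as a function on {0,1}^{{1,…,ℓ}}. -/

import Mathlib

/-!
Under `ν_{k,ℓ}` a pattern on the sites `1, …, m` with `j` particles has the hypergeometric
weight `k^(j) (ℓ - k)^(m - j) / ℓ^(m)` (falling factorials), the product of the ratios
`(k - i) / (ℓ - i)` for `i < j` and `(ℓ - k - (i - j)) / (ℓ - i)` for `j ≤ i < m`. Each ratio is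
within `m / (ℓ - m)` of `θ = k / ℓ`, resp. `1 - θ`, so the weight differs from the Bernoulli
weight `θ^j (1 - θ)^(m - j)` by at most `m² / (ℓ - m)`, uniformly in `k`. Summing over the `2^m`
patterns bounds `|∫ f dν_{k,ℓ} - f̄(k/ℓ)|` by `m² / (ℓ - m) · ∑ |f|`.
-/

noncomputable section

/-- Extension of a configuration on `{1,…,ℓ}` (coded by `Fin ℓ`) to `{0,1}^ℤ`,
by filling with `0` outside of `{1,…,ℓ}`. -/
def extCfg (ℓ : ℕ) (ξ : Fin ℓ → Bool) : ℤ → Bool :=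
  fun z => if h : 1 ≤ z ∧ z ≤ (ℓ : ℤ) then ξ ⟨(z - 1).toNat, by omega⟩ else false

/-- The expectation `∫ f dν_{k,ℓ}` of `f` under the uniform measure on
configurations of `{0,1}^{{1,…,ℓ}}` with exactly `k` particles. -/
def canonicalExp (ℓ k : ℕ) (f : (ℤ → Bool) → ℝ) : ℝ :=
  ((Finset.univ.filter
      (fun ξ : Fin ℓ → Bool => (∑ x : Fin ℓ, (if ξ x then 1 else 0)) = k)).card : ℝ)⁻¹ *
    ∑ ξ ∈ Finset.univ.filter
        (fun ξ : Fin ℓ → Bool => (∑ x : Fin ℓ, (if ξ x then 1 else 0)) = k),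
      f (extCfg ℓ ξ)

/-- `f̄(θ)`: the expectation of a local function `f` with support in `{1,…,m}`
when the coordinates are i.i.d. Bernoulli(θ). -/
def bernExp (m : ℕ) (f : (ℤ → Bool) → ℝ) (θ : ℝ) : ℝ :=
  ∑ ζ : Fin m → Bool, (∏ j : Fin m, (if ζ j then θ else 1 - θ)) * f (extCfg m ζ)

open Finset

theorem Finset.norm_prod_sub_prod_le {ι R : Type*} [NormedCommRing R] [NormOneClass R]
    (s : Finset ι) {a b : ι → R} (ha : ∀ i ∈ s, ‖a i‖ ≤ 1) (hb : ∀ i ∈ s, ‖b i‖ ≤ 1) :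
    ‖∏ i ∈ s, a i - ∏ i ∈ s, b i‖ ≤ ∑ i ∈ s, ‖a i - b i‖ := by
  classical
  induction s using Finset.induction_on with
  | empty => simp
  | insert i s hi ih =>
    rw [prod_insert hi, prod_insert hi, sum_insert hi]
    have hai : ‖a i‖ ≤ 1 := ha i (mem_insert_self i s)
    have hbs : ‖∏ j ∈ s, b j‖ ≤ 1 := (norm_prod_le s b).trans
      (prod_le_one (fun _ _ => norm_nonneg _) fun j hj => hb j (mem_insert_of_mem hj))
    have ih' := ih (fun j hj => ha j (mem_insert_of_mem hj)) fun j hj => hb j (mem_insert_of_mem hj)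
    calc ‖a i * ∏ j ∈ s, a j - b i * ∏ j ∈ s, b j‖
        = ‖a i * (∏ j ∈ s, a j - ∏ j ∈ s, b j) + (a i - b i) * ∏ j ∈ s, b j‖ := by congr 1; ring
      _ ≤ ‖a i‖ * ‖∏ j ∈ s, a j - ∏ j ∈ s, b j‖ + ‖a i - b i‖ * ‖∏ j ∈ s, b j‖ :=
        (norm_add_le _ _).trans (add_le_add (norm_mul_le _ _) (norm_mul_le _ _))
      _ ≤ 1 * ∑ j ∈ s, ‖a j - b j‖ + ‖a i - b i‖ * 1 := by gcongr
      _ = ‖a i - b i‖ + ∑ j ∈ s, ‖a j - b j‖ := by ring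

theorem Finset.prod_range_ite_lt {M : Type*} [CommMonoid M] (g h : ℕ → M) {j m : ℕ}
    (hjm : j ≤ m) :
    ∏ i ∈ range m, (if i < j then g i else h i)
      = (∏ i ∈ range j, g i) * ∏ i ∈ range (m - j), h (j + i) := by
  obtain ⟨b, rfl⟩ := Nat.exists_eq_add_of_le hjm
  rw [prod_range_add, Nat.add_sub_cancel_left]
  congr 1
  · exact prod_congr rfl fun i hi => if_pos (mem_range.mp hi)
  · exact prod_congr rfl fun i _ => if_neg (by omega)

theorem pow_mul_pow_eq_prod_range {M : Type*} [CommMonoid M] (a b : M) {j m : ℕ} (hjm : j ≤ m) :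
    a ^ j * b ^ (m - j) = ∏ i ∈ range m, if i < j then a else b := by
  simp [prod_range_ite_lt _ _ hjm]

theorem norm_natCast_div_natCast_le_one {p q : ℕ} (h : p ≤ q) : ‖(p : ℝ) / q‖ ≤ 1 := by
  rw [Real.norm_of_nonneg (by positivity)]
  exact div_le_one_of_le₀ (by exact_mod_cast h) (by positivity)

theorem abs_natSub_div_sub_div_le {n r i ℓ : ℕ} (hn : n ≤ ℓ) (hri : r ≤ i) (hiℓ : i < ℓ) :
    |((n - r : ℕ) : ℝ) / (ℓ - i : ℕ) - n / ℓ| ≤ i / (ℓ - i : ℕ) := by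
  have hℓi : (0 : ℝ) < (ℓ - i : ℕ) := by exact_mod_cast Nat.sub_pos_of_lt hiℓ
  have hℓ : (0 : ℝ) < ℓ := by exact_mod_cast (Nat.zero_le i).trans_lt hiℓ
  rcases le_or_gt r n with hrn | hnr
  · have hn' : (n : ℝ) ≤ ℓ := by exact_mod_cast hn
    have hri' : (r : ℝ) ≤ i := by exact_mod_cast hri
    rw [div_sub_div _ _ hℓi.ne' hℓ.ne', abs_div, abs_of_pos (mul_pos hℓi hℓ),
      ← mul_div_mul_right (i : ℝ) _ hℓ.ne']
    gcongr
    rw [Nat.cast_sub hrn, Nat.cast_sub hiℓ.le, abs_le]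
    constructor <;> nlinarith
  · rw [Nat.sub_eq_zero_of_le hnr.le, Nat.cast_zero, zero_div, zero_sub, abs_neg,
      abs_of_nonneg (by positivity)]
    calc (n : ℝ) / ℓ ≤ i / ℓ := by gcongr; exact_mod_cast (hnr.trans_le hri).le
      _ ≤ i / (ℓ - i : ℕ) := by gcongr; exact_mod_cast Nat.sub_le ℓ i

theorem Nat.choose_sub_mul_descFactorial {j k m n : ℕ} (hjk : j ≤ k) (hjm : j ≤ m)
    (hk : k ≤ m + n) :
    n.choose (k - j) * (m + n).descFactorial m
      = (m + n).choose k * (k.descFactorial j * (m + n - k).descFactorial (m - j)) := by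
  obtain ⟨a, rfl⟩ := Nat.exists_eq_add_of_le hjk
  obtain ⟨b, rfl⟩ := Nat.exists_eq_add_of_le hjm
  rcases lt_or_ge n a with hna | han
  · rw [Nat.choose_eq_zero_of_lt (show j + a - j > n by omega),
      Nat.descFactorial_eq_zero_iff_lt.mpr (show j + b + n - (j + a) < j + b - j by omega)]
    simp
  obtain ⟨c, rfl⟩ := Nat.exists_eq_add_of_le han
  -- now `k = j + a`, `m = j + b`, `n = a + c`, and both sides times `a! c!` equal `(m + n)!`
  have hsub : j + b + (a + c) - (j + a) = b + c := by omega
  simp only [Nat.add_sub_cancel_left, hsub]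
  have hac : (a + c).choose a * a.factorial * c.factorial = (a + c).factorial := by
    simpa using Nat.choose_mul_factorial_mul_factorial (Nat.le_add_right a c)
  have hN : (a + c).factorial * (j + b + (a + c)).descFactorial (j + b)
      = (j + b + (a + c)).factorial := by
    simpa [show j + b + (a + c) - (j + b) = a + c by omega] using
      Nat.factorial_mul_descFactorial (Nat.le_add_right (j + b) (a + c))
  have hja : a.factorial * (j + a).descFactorial j = (j + a).factorial := by
    simpa using Nat.factorial_mul_descFactorial (Nat.le_add_right j a)
  have hbc : c.factorial * (b + c).descFactorial b = (b + c).factorial := by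
    simpa using Nat.factorial_mul_descFactorial (Nat.le_add_right b c)
  have hN' : (j + b + (a + c)).choose (j + a) * (j + a).factorial * (b + c).factorial
      = (j + b + (a + c)).factorial := by
    simpa [hsub] using
      Nat.choose_mul_factorial_mul_factorial (show j + a ≤ j + b + (a + c) by omega)
  refine Nat.eq_of_mul_eq_mul_right (Nat.mul_pos a.factorial_pos c.factorial_pos) ?_
  calc (a + c).choose a * (j + b + (a + c)).descFactorial (j + b) * (a.factorial * c.factorial)
      = (a + c).choose a * a.factorial * c.factorial
          * (j + b + (a + c)).descFactorial (j + b) := by ring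
    _ = (j + b + (a + c)).choose (j + a) * (a.factorial * (j + a).descFactorial j)
          * (c.factorial * (b + c).descFactorial b) := by rw [hac, hN, hja, hbc, hN']
    _ = _ := by ring

def numOnes {n : ℕ} (ξ : Fin n → Bool) : ℕ := ∑ x, if ξ x then 1 else 0

theorem numOnes_eq_card {n : ℕ} (ξ : Fin n → Bool) : numOnes ξ = #{x | ξ x} := by
  simp [numOnes]

theorem numOnes_le {n : ℕ} (ξ : Fin n → Bool) : numOnes ξ ≤ n := by
  simpa [numOnes_eq_card] using card_filter_le univ fun x => ξ x

theorem numOnes_append {m n : ℕ} (ζ : Fin m → Bool) (η : Fin n → Bool) :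
    numOnes (Fin.append ζ η) = numOnes ζ + numOnes η := by
  simp only [numOnes, Fin.sum_univ_add, Fin.append_left, Fin.append_right]

theorem card_numOnes_eq (n k : ℕ) : #{ξ : Fin n → Bool | numOnes ξ = k} = n.choose k := by
  rw [show n.choose k = #(powersetCard k (univ : Finset (Fin n))) by simp]
  exact card_nbij' (fun ξ => ({x | ξ x} : Finset (Fin n))) (fun s x => decide (x ∈ s))
    (fun ξ hξ => by simp_all [numOnes_eq_card]) (fun s hs => by simp_all [numOnes_eq_card])
    (fun ξ _ => by funext x; simp) fun s _ => by ext x; simp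

theorem card_add_numOnes_eq_mul_descFactorial {j k m n : ℕ} (hjm : j ≤ m) (hk : k ≤ m + n) :
    #{η : Fin n → Bool | j + numOnes η = k} * (m + n).descFactorial m
      = (m + n).choose k * (k.descFactorial j * (m + n - k).descFactorial (m - j)) := by
  rcases le_or_gt j k with hjk | hkj
  · rw [filter_congr (q := fun η => numOnes η = k - j) fun η _ => by omega, card_numOnes_eq,
      Nat.choose_sub_mul_descFactorial hjk hjm hk]
  · rw [Nat.descFactorial_eq_zero_iff_lt.mpr hkj, filter_false_of_mem fun η _ => by omega]
    simp

theorem extCfg_append_of_le {m n : ℕ} (ζ : Fin m → Bool) (η : Fin n → Bool) {z : ℤ}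
    (hz : z ∈ Set.Icc 1 (m : ℤ)) : extCfg (m + n) (Fin.append ζ η) z = extCfg m ζ z := by
  obtain ⟨h1, h2⟩ := hz
  have hlt : (z - 1).toNat < m := by omega
  simp only [extCfg, dif_pos (⟨h1, h2⟩ : 1 ≤ z ∧ z ≤ (m : ℤ)),
    dif_pos (⟨h1, by omega⟩ : 1 ≤ z ∧ z ≤ ((m + n : ℕ) : ℤ))]
  exact Fin.append_left ζ η ⟨_, hlt⟩

theorem bernExp_eq_sum (m : ℕ) (f : (ℤ → Bool) → ℝ) (θ : ℝ) :
    bernExp m f θ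
      = ∑ ζ : Fin m → Bool, θ ^ numOnes ζ * (1 - θ) ^ (m - numOnes ζ) * f (extCfg m ζ) := by
  refine sum_congr rfl fun ζ _ => ?_
  have hcompl : #{x | ¬ζ x} = m - numOnes ζ := by
    have h := card_filter_add_card_filter_not (s := univ) (p := fun x => ζ x = true)
    rw [card_univ, Fintype.card_fin] at h
    rw [numOnes_eq_card]
    omega
  rw [prod_ite, prod_const, prod_const, hcompl, numOnes_eq_card]

/-- The `ν_{k,ℓ}`-probability that the sites `1, …, m` carry a given pattern with `j` particles. -/
def hypergeomWeight (ℓ k m j : ℕ) : ℝ :=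
  (k.descFactorial j * (ℓ - k).descFactorial (m - j) : ℕ) / ℓ.descFactorial m

theorem hypergeomWeight_eq_prod {ℓ k m j : ℕ} (hjm : j ≤ m) :
    hypergeomWeight ℓ k m j
      = ∏ i ∈ range m, ((if i < j then k - i else ℓ - k - (i - j) : ℕ) : ℝ) / (ℓ - i : ℕ) := by
  rw [hypergeomWeight, prod_div_distrib, ← Nat.cast_prod, ← Nat.cast_prod,
    prod_range_ite_lt _ _ hjm]
  simp [Nat.descFactorial_eq_prod_range]

theorem canonicalExp_eq_sum_hypergeomWeight {m n k : ℕ} (hk : k ≤ m + n) {f : (ℤ → Bool) → ℝ}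
    (hf : DependsOn f (Set.Icc 1 (m : ℤ))) :
    canonicalExp (m + n) k f
      = ∑ ζ : Fin m → Bool, hypergeomWeight (m + n) k m (numOnes ζ) * f (extCfg m ζ) := by
  have hsplit : ∑ ξ : Fin (m + n) → Bool with numOnes ξ = k, f (extCfg (m + n) ξ)
      = ∑ ζ : Fin m → Bool, (#{η : Fin n → Bool | numOnes ζ + numOnes η = k} : ℝ)
          * f (extCfg m ζ) := by
    rw [sum_filter, ← (Fin.appendEquiv m n).sum_comp, Fintype.sum_prod_type]
    refine sum_congr rfl fun ζ _ => ?_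
    change ∑ η, (if numOnes (Fin.append ζ η) = k then f (extCfg (m + n) (Fin.append ζ η))
      else 0) = _
    simp only [numOnes_append, hf fun z hz => extCfg_append_of_le ζ _ hz]
    rw [← sum_filter, sum_const, nsmul_eq_mul]
  have hchoose : ((m + n).choose k : ℝ) ≠ 0 := by
    exact_mod_cast (Nat.choose_pos hk).ne'
  have hdesc : ((m + n).descFactorial m : ℝ) ≠ 0 := by
    exact_mod_cast (Nat.descFactorial_pos.mpr (Nat.le_add_right m n)).ne'
  change (#{ξ : Fin (m + n) → Bool | numOnes ξ = k} : ℝ)⁻¹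
      * ∑ ξ : Fin (m + n) → Bool with numOnes ξ = k, f (extCfg (m + n) ξ) = _
  rw [hsplit, card_numOnes_eq, mul_sum]
  refine sum_congr rfl fun ζ _ => ?_
  rw [← mul_assoc, hypergeomWeight]
  congr 1
  rw [inv_mul_eq_div, div_eq_div_iff hchoose hdesc]
  exact_mod_cast (card_add_numOnes_eq_mul_descFactorial (numOnes_le ζ) hk).trans (mul_comm _ _)

theorem abs_hypergeomWeight_sub_le {ℓ k m j : ℕ} (hjm : j ≤ m) (hmℓ : m < ℓ) (hkℓ : k ≤ ℓ) :
    |hypergeomWeight ℓ k m j - ((k : ℝ) / ℓ) ^ j * (1 - (k : ℝ) / ℓ) ^ (m - j)|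
      ≤ m ^ 2 / (ℓ - m : ℕ) := by
  have hℓ : (0 : ℝ) < ℓ := by exact_mod_cast (Nat.zero_le m).trans_lt hmℓ
  have hℓm : (0 : ℝ) < (ℓ - m : ℕ) := by exact_mod_cast Nat.sub_pos_of_lt hmℓ
  -- for `j ≤ k` every factor of the product formula lies in `[0, 1]`; for `j > k` the weight
  -- vanishes, but the factors `(ℓ - k - (i - j)) / (ℓ - i)` exceed `1`
  rcases le_or_gt j k with hjk | hkj
  · have hcompl : 1 - (k : ℝ) / ℓ = (ℓ - k : ℕ) / ℓ := by
      rw [Nat.cast_sub hkℓ, sub_div, div_self hℓ.ne']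
    rw [hcompl, pow_mul_pow_eq_prod_range _ _ hjm, hypergeomWeight_eq_prod hjm,
      ← Real.norm_eq_abs]
    calc _ ≤ ∑ i ∈ range m, ‖((if i < j then k - i else ℓ - k - (i - j) : ℕ) : ℝ) / (ℓ - i : ℕ)
            - if i < j then (k : ℝ) / ℓ else ((ℓ - k : ℕ) : ℝ) / ℓ‖ := by
          refine norm_prod_sub_prod_le _ (fun i hi => ?_) fun i _ => ?_
          · apply norm_natCast_div_natCast_le_one
            split_ifs <;> omega
          · split_ifs <;> apply norm_natCast_div_natCast_le_one <;> omega
      _ ≤ ∑ i ∈ range m, (m : ℝ) / (ℓ - m : ℕ) := by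
          refine sum_le_sum fun i hi => ?_
          rw [mem_range] at hi
          calc _ ≤ (i : ℝ) / (ℓ - i : ℕ) := by
                rw [Real.norm_eq_abs]
                split_ifs <;> apply abs_natSub_div_sub_div_le <;> omega
            _ ≤ (m : ℝ) / (ℓ - m : ℕ) := by
                gcongr
      _ = m ^ 2 / (ℓ - m : ℕ) := by
          rw [sum_const, card_range, nsmul_eq_mul, mul_div_assoc', sq]
  · have hθ : (k : ℝ) / ℓ ≤ 1 := div_le_one_of_le₀ (by exact_mod_cast hkℓ) hℓ.le
    have hθ' : 0 ≤ 1 - (k : ℝ) / ℓ := sub_nonneg.mpr hθ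
    have hm : (1 : ℝ) ≤ m := by exact_mod_cast (Nat.zero_le k).trans_lt (hkj.trans_le hjm)
    rw [hypergeomWeight, Nat.descFactorial_eq_zero_iff_lt.mpr hkj, zero_mul, Nat.cast_zero,
      zero_div, zero_sub, abs_neg, abs_of_nonneg (by positivity)]
    calc ((k : ℝ) / ℓ) ^ j * (1 - (k : ℝ) / ℓ) ^ (m - j) ≤ ((k : ℝ) / ℓ) ^ 1 * 1 :=
          mul_le_mul (pow_le_pow_of_le_one (by positivity) hθ (by omega))
            (pow_le_one₀ hθ' (sub_le_self _ (by positivity))) (by positivity) (by positivity)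
      _ ≤ m / (ℓ - m : ℕ) := by
          rw [pow_one, mul_one]
          gcongr
          · exact_mod_cast (hkj.trans_le hjm).le
          · omega
      _ ≤ m ^ 2 / (ℓ - m : ℕ) := by
          gcongr
          exact le_self_pow₀ hm two_ne_zero

theorem abs_canonicalExp_sub_bernExp_le {m ℓ k : ℕ} (hmℓ : m < ℓ) (hkℓ : k ≤ ℓ)
    {f : (ℤ → Bool) → ℝ} (hf : DependsOn f (Set.Icc 1 (m : ℤ))) :
    |canonicalExp ℓ k f - bernExp m f ((k : ℝ) / ℓ)|
      ≤ m ^ 2 / (ℓ - m : ℕ) * ∑ ζ : Fin m → Bool, |f (extCfg m ζ)| := by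
  obtain ⟨n, rfl⟩ := Nat.exists_eq_add_of_le hmℓ.le
  rw [canonicalExp_eq_sum_hypergeomWeight hkℓ hf, bernExp_eq_sum, ← sum_sub_distrib, mul_sum]
  refine (abs_sum_le_sum_abs _ _).trans (sum_le_sum fun ζ _ => ?_)
  rw [← sub_mul, abs_mul]
  gcongr
  exact abs_hypergeomWeight_sub_le (numOnes_le ζ) hmℓ hkℓ

/-- **Equivalence of ensembles for local functions.** If
`f : {0,1}^ℤ → ℝ` is local with support contained in `{1,…,m}`, then
`lim_{ℓ→∞} max_{0 ≤ k ≤ ℓ} |∫ f dν_{k,ℓ} − f̄(k/ℓ)| = 0`. -/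
theorem equivalence_of_ensembles (m : ℕ) (f : (ℤ → Bool) → ℝ)
    (hfloc : ∀ ξ ζ : ℤ → Bool, (∀ k : ℤ, 1 ≤ k → k ≤ (m : ℤ) → ξ k = ζ k) → f ξ = f ζ) :
    Filter.Tendsto (fun ℓ : ℕ =>
        (Finset.range (ℓ + 1)).sup' Finset.nonempty_range_add_one
          (fun k => |canonicalExp ℓ k f - bernExp m f ((k : ℝ) / (ℓ : ℝ))|))
      Filter.atTop (nhds 0) := by
  have hf : DependsOn f (Set.Icc 1 (m : ℤ)) := fun ξ ζ h => hfloc ξ ζ fun z h1 h2 => h z ⟨h1, h2⟩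
  have hlim : Filter.Tendsto (fun ℓ : ℕ => (m : ℝ) ^ 2 / (ℓ - m : ℕ) * ∑ ζ, |f (extCfg m ζ)|)
      Filter.atTop (nhds 0) := by
    simpa using ((tendsto_const_div_atTop_nhds_zero_nat ((m : ℝ) ^ 2)).comp
      (Filter.tendsto_sub_atTop_nat m)).mul_const (∑ ζ : Fin m → Bool, |f (extCfg m ζ)|)
  refine squeeze_zero'
    (.of_forall fun ℓ => le_sup'_of_le _ (mem_range.mpr ℓ.succ_pos) (abs_nonneg _)) ?_ hlim
  filter_upwards [Filter.eventually_gt_atTop m] with ℓ hmℓ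
  exact sup'_le _ _ fun k hk => abs_canonicalExp_sub_bernExp_le hmℓ (mem_range_succ_iff.mp hk) hf

end
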